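/- arXiv:1003.0429 — 5 statements merged into one kernel-verified Lean document; each statement's English description precedes it below -/
import Mathlib

section
/- If φ = δf is symmetric in its three arguments, then β(x,y) = f(x,y) + f(y,x) is a 2-cocycle on (Z₂)ⁿ: β(x+y,z) + β(x,y+z) + β(x,y) + β(y,z) = 0 for all x,y,z. -/
/-- If φ = δf is symmetric, then β(x,y) = f(x,y)+f(y,x) is a 2-cocycle on (Z₂)ⁿ. -/
theorem stmt_3 (n : ℕ) (f : (Fin n → ZMod 2) → (Fin n → ZMod 2) → ZMod 2)
    (hf0 : ∀ x : Fin n → ZMod 2, f 0 x = 0 ∧ f x 0 = 0)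
    (β : (Fin n → ZMod 2) → (Fin n → ZMod 2) → ZMod 2)
    (hβ : ∀ x y, β x y = f x y + f y x)
    (φ : (Fin n → ZMod 2) → (Fin n → ZMod 2) → (Fin n → ZMod 2) → ZMod 2)
    (hφ : ∀ x y z, φ x y z = f y z + f (x + y) z + f x (y + z) + f x y)
    (hsym : ∀ x y z, φ x y z = φ y x z ∧ φ x y z = φ x z y) :
    ∀ x y z : Fin n → ZMod 2,
      β (x + y) z + β x (y + z) + β x y + β y z = 0 := by
  intro x y z
  have h : φ x y z = φ z y x := by
    rw [(hsym x y z).2, (hsym x z y).1, (hsym z x y).2]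
  rw [hφ, hφ] at h
  rw [add_comm z y, add_comm y x] at h
  have h2 : (2 : ZMod 2) = 0 := rfl
  simp only [hβ]
  linear_combination h + (f y x + f (y + z) x + f z (x + y) + f z y) * h2
end

section
/- If φ = δf is symmetric, then φ is completely determined by β via φ(x,y,z) = β(x+y, z) + β(x,z) + β(y,z), and also φ(x,y,z) = β(x, y+z) + β(x,y) + β(x,z). -/
/-- If φ = δf is symmetric, then φ is determined by β as the defect of linearity. -/
theorem stmt_4 (n : ℕ) (f : (Fin n → ZMod 2) → (Fin n → ZMod 2) → ZMod 2)
    (hf0 : ∀ x : Fin n → ZMod 2, f 0 x = 0 ∧ f x 0 = 0)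
    (β : (Fin n → ZMod 2) → (Fin n → ZMod 2) → ZMod 2)
    (hβ : ∀ x y, β x y = f x y + f y x)
    (φ : (Fin n → ZMod 2) → (Fin n → ZMod 2) → (Fin n → ZMod 2) → ZMod 2)
    (hφ : ∀ x y z, φ x y z = f y z + f (x + y) z + f x (y + z) + f x y)
    (hsym : ∀ x y z, φ x y z = φ y x z ∧ φ x y z = φ x z y) :
    ∀ x y z : Fin n → ZMod 2,
      φ x y z = β (x + y) z + β x z + β y z ∧
      φ x y z = β x (y + z) + β x y + β x z := by
  have htwo : (2 : ZMod 2) = 0 := rfl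
  have key : ∀ x y z : Fin n → ZMod 2,
      φ x y z = β (x + y) z + β x z + β y z := by
    intro x y z
    have h1 := (hsym x z y).1
    rw [hφ, hφ, add_comm z y, add_comm z x] at h1
    rw [hφ, hβ, hβ, hβ]
    linear_combination h1 + (f x y - f x z - f z y) * htwo
  intro x y z
  refine ⟨key x y z, ?_⟩
  have h2 : φ x y z = φ y z x := by rw [(hsym x y z).1, (hsym y x z).2]
  rw [h2, key y z x, hβ, hβ, hβ, hβ, hβ, hβ]
  ring
end

section
/- Let f_O(x,y) = Σ_{i<j<k}(xᵢxⱼy_k + xᵢyⱼx_k + yᵢxⱼx_k) + Σ_{i≤j} xᵢyⱼ on (Z₂)ⁿ. Then δf_O(x,y,z) = Σ_{i,j,k pairwise distinct} xᵢyⱼz_k, which is a symmetric trilinear function of (x,y,z). -/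
/-- The twisting function of the algebra Oₙ. -/
def fO (n : ℕ) (x y : Fin n → ZMod 2) : ZMod 2 :=
  (∑ p ∈ Finset.univ.filter
      (fun p : Fin n × Fin n × Fin n => p.1 < p.2.1 ∧ p.2.1 < p.2.2),
    (x p.1 * x p.2.1 * y p.2.2 + x p.1 * y p.2.1 * x p.2.2 + y p.1 * x p.2.1 * x p.2.2))
  + ∑ p ∈ Finset.univ.filter (fun p : Fin n × Fin n => p.1 ≤ p.2), x p.1 * y p.2

open Finset

private def trip (n : ℕ) (a b c : Fin n → ZMod 2) : ZMod 2 :=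
  ∑ p ∈ Finset.univ.filter
      (fun p : Fin n × Fin n × Fin n => p.1 < p.2.1 ∧ p.2.1 < p.2.2),
    a p.1 * b p.2.1 * c p.2.2

private def bil (n : ℕ) (x y : Fin n → ZMod 2) : ZMod 2 :=
  ∑ p ∈ Finset.univ.filter (fun p : Fin n × Fin n => p.1 ≤ p.2), x p.1 * y p.2

private lemma fO_eq (n : ℕ) (x y : Fin n → ZMod 2) :
    fO n x y = trip n x x y + trip n x y x + trip n y x x + bil n x y := by
  simp [fO, trip, bil, Finset.sum_add_distrib, add_assoc]

private lemma trip_add₁ (n : ℕ) (a a' b c : Fin n → ZMod 2) :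
    trip n (a + a') b c = trip n a b c + trip n a' b c := by
  simp [trip, add_mul, Finset.sum_add_distrib]

private lemma trip_add₂ (n : ℕ) (a b b' c : Fin n → ZMod 2) :
    trip n a (b + b') c = trip n a b c + trip n a b' c := by
  simp [trip, add_mul, mul_add, Finset.sum_add_distrib]

private lemma trip_add₃ (n : ℕ) (a b c c' : Fin n → ZMod 2) :
    trip n a b (c + c') = trip n a b c + trip n a b c' := by
  simp [trip, mul_add, Finset.sum_add_distrib]

private lemma bil_add₁ (n : ℕ) (x x' y : Fin n → ZMod 2) :
    bil n (x + x') y = bil n x y + bil n x' y := by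
  simp [bil, add_mul, Finset.sum_add_distrib]

private lemma bil_add₂ (n : ℕ) (x y y' : Fin n → ZMod 2) :
    bil n x (y + y') = bil n x y + bil n x y' := by
  simp [bil, mul_add, Finset.sum_add_distrib]

private def π2 {n : ℕ} : (Fin n × Fin n × Fin n) ≃ (Fin n × Fin n × Fin n) :=
  ⟨fun p => (p.1, p.2.2, p.2.1), fun p => (p.1, p.2.2, p.2.1), fun _ => rfl, fun _ => rfl⟩
private def π3 {n : ℕ} : (Fin n × Fin n × Fin n) ≃ (Fin n × Fin n × Fin n) :=
  ⟨fun p => (p.2.1, p.1, p.2.2), fun p => (p.2.1, p.1, p.2.2), fun _ => rfl, fun _ => rfl⟩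
private def π4 {n : ℕ} : (Fin n × Fin n × Fin n) ≃ (Fin n × Fin n × Fin n) :=
  ⟨fun p => (p.2.2, p.1, p.2.1), fun p => (p.2.1, p.2.2, p.1), fun _ => rfl, fun _ => rfl⟩
private def π5 {n : ℕ} : (Fin n × Fin n × Fin n) ≃ (Fin n × Fin n × Fin n) :=
  ⟨fun p => (p.2.1, p.2.2, p.1), fun p => (p.2.2, p.1, p.2.1), fun _ => rfl, fun _ => rfl⟩
private def π6 {n : ℕ} : (Fin n × Fin n × Fin n) ≃ (Fin n × Fin n × Fin n) :=
  ⟨fun p => (p.2.2, p.2.1, p.1), fun p => (p.2.2, p.2.1, p.1), fun _ => rfl, fun _ => rfl⟩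

private lemma key (n : ℕ) (F : (Fin n × Fin n × Fin n) → ZMod 2) :
    ∑ p ∈ Finset.univ.filter
        (fun p : Fin n × Fin n × Fin n => p.1 ≠ p.2.1 ∧ p.1 ≠ p.2.2 ∧ p.2.1 ≠ p.2.2), F p
    = ∑ p ∈ Finset.univ.filter (fun p : Fin n × Fin n × Fin n => p.1 < p.2.1 ∧ p.2.1 < p.2.2), F p
    + ∑ p ∈ Finset.univ.filter (fun p : Fin n × Fin n × Fin n => p.1 < p.2.2 ∧ p.2.2 < p.2.1), F p
    + ∑ p ∈ Finset.univ.filter (fun p : Fin n × Fin n × Fin n => p.2.1 < p.1 ∧ p.1 < p.2.2), F p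
    + ∑ p ∈ Finset.univ.filter (fun p : Fin n × Fin n × Fin n => p.2.1 < p.2.2 ∧ p.2.2 < p.1), F p
    + ∑ p ∈ Finset.univ.filter (fun p : Fin n × Fin n × Fin n => p.2.2 < p.1 ∧ p.1 < p.2.1), F p
    + ∑ p ∈ Finset.univ.filter (fun p : Fin n × Fin n × Fin n => p.2.2 < p.2.1 ∧ p.2.1 < p.1), F p
    := by
  simp only [Finset.sum_filter, ← Finset.sum_add_distrib]
  apply Finset.sum_congr rfl
  rintro ⟨⟨i, _⟩, ⟨j, _⟩, ⟨k, _⟩⟩ _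
  simp only [Fin.mk_lt_mk, ne_eq, Fin.mk.injEq]
  split_ifs <;> first | ring1 | (exfalso; push_neg at *; omega)

private lemma piece_eq {n : ℕ} (π : (Fin n × Fin n × Fin n) ≃ (Fin n × Fin n × Fin n))
    (C : (Fin n × Fin n × Fin n) → Prop) [DecidablePred C]
    (F G : (Fin n × Fin n × Fin n) → ZMod 2)
    (h1 : ∀ p : Fin n × Fin n × Fin n,
      (p.1 < p.2.1 ∧ p.2.1 < p.2.2) ↔ C (π p))
    (h2 : ∀ p, G p = F (π p)) :
    ∑ p ∈ Finset.univ.filter C, F p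
      = ∑ p ∈ Finset.univ.filter
          (fun p : Fin n × Fin n × Fin n => p.1 < p.2.1 ∧ p.2.1 < p.2.2), G p := by
  refine (Finset.sum_equiv π ?_ ?_).symm
  · intro p; simp only [Finset.mem_filter, Finset.mem_univ, true_and]; exact h1 p
  · intro p _; exact h2 p

private lemma S_split (n : ℕ) (x y z : Fin n → ZMod 2) :
    ∑ p ∈ Finset.univ.filter
        (fun p : Fin n × Fin n × Fin n => p.1 ≠ p.2.1 ∧ p.1 ≠ p.2.2 ∧ p.2.1 ≠ p.2.2),
      x p.1 * y p.2.1 * z p.2.2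
      = trip n x y z + trip n x z y + trip n y x z
        + trip n y z x + trip n z x y + trip n z y x := by
  have e2 : ∑ p ∈ Finset.univ.filter
      (fun p : Fin n × Fin n × Fin n => p.1 < p.2.2 ∧ p.2.2 < p.2.1),
      x p.1 * y p.2.1 * z p.2.2 = trip n x z y :=
    piece_eq π2 _ _ _ (fun p => Iff.rfl)
      (fun p => by show x p.1 * z p.2.1 * y p.2.2 = _; simp only [π2, Equiv.coe_fn_mk]; ring)
  have e3 : ∑ p ∈ Finset.univ.filter
      (fun p : Fin n × Fin n × Fin n => p.2.1 < p.1 ∧ p.1 < p.2.2),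
      x p.1 * y p.2.1 * z p.2.2 = trip n y x z :=
    piece_eq π3 _ _ _ (fun p => Iff.rfl)
      (fun p => by show y p.1 * x p.2.1 * z p.2.2 = _; simp only [π3, Equiv.coe_fn_mk]; ring)
  have e4 : ∑ p ∈ Finset.univ.filter
      (fun p : Fin n × Fin n × Fin n => p.2.1 < p.2.2 ∧ p.2.2 < p.1),
      x p.1 * y p.2.1 * z p.2.2 = trip n y z x :=
    piece_eq π4 _ _ _ (fun p => Iff.rfl)
      (fun p => by show y p.1 * z p.2.1 * x p.2.2 = _; simp only [π4, Equiv.coe_fn_mk]; ring)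
  have e5 : ∑ p ∈ Finset.univ.filter
      (fun p : Fin n × Fin n × Fin n => p.2.2 < p.1 ∧ p.1 < p.2.1),
      x p.1 * y p.2.1 * z p.2.2 = trip n z x y :=
    piece_eq π5 _ _ _ (fun p => Iff.rfl)
      (fun p => by show z p.1 * x p.2.1 * y p.2.2 = _; simp only [π5, Equiv.coe_fn_mk]; ring)
  have e6 : ∑ p ∈ Finset.univ.filter
      (fun p : Fin n × Fin n × Fin n => p.2.2 < p.2.1 ∧ p.2.1 < p.1),
      x p.1 * y p.2.1 * z p.2.2 = trip n z y x :=
    piece_eq π6 _ _ _ (fun p => Iff.rfl)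
      (fun p => by show z p.1 * y p.2.1 * x p.2.2 = _; simp only [π6, Equiv.coe_fn_mk]; ring)
  rw [key, e2, e3, e4, e5, e6]
  rfl

/-- δf_O(x,y,z) = Σ_{i,j,k pairwise distinct} xᵢyⱼz_k, a symmetric trilinear function. -/
theorem stmt_7 (n : ℕ)
    (S : (Fin n → ZMod 2) → (Fin n → ZMod 2) → (Fin n → ZMod 2) → ZMod 2)
    (hS : ∀ x y z, S x y z = ∑ p ∈ Finset.univ.filter
        (fun p : Fin n × Fin n × Fin n => p.1 ≠ p.2.1 ∧ p.1 ≠ p.2.2 ∧ p.2.1 ≠ p.2.2),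
      x p.1 * y p.2.1 * z p.2.2) :
    (∀ x y z : Fin n → ZMod 2,
        fO n y z + fO n (x + y) z + fO n x (y + z) + fO n x y = S x y z) ∧
    (∀ x y z : Fin n → ZMod 2, S x y z = S y x z ∧ S x y z = S x z y) ∧
    (∀ x x' y z : Fin n → ZMod 2,
        S (x + x') y z = S x y z + S x' y z ∧
        S y (x + x') z = S y x z + S y x' z ∧
        S y z (x + x') = S y z x + S y z x') := by
  refine ⟨?_, ?_, ?_⟩
  · intro x y z
    rw [hS, S_split]
    simp only [fO_eq, trip_add₁, trip_add₂, trip_add₃, bil_add₁, bil_add₂]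
    ring_nf
    simp only [show (2 : ZMod 2) = 0 from rfl, mul_zero, zero_mul, add_zero, zero_add]
  · intro x y z
    constructor
    · rw [hS x y z, hS y x z]
      refine Finset.sum_equiv π3 ?_ ?_
      · intro p
        simp only [Finset.mem_filter, Finset.mem_univ, true_and, π3, Equiv.coe_fn_mk]
        exact ⟨fun h => ⟨h.1.symm, h.2.2, h.2.1⟩, fun h => ⟨h.1.symm, h.2.2, h.2.1⟩⟩
      · intro p _
        simp only [π3, Equiv.coe_fn_mk]; ring
    · rw [hS x y z, hS x z y]
      refine Finset.sum_equiv π2 ?_ ?_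
      · intro p
        simp only [Finset.mem_filter, Finset.mem_univ, true_and, π2, Equiv.coe_fn_mk]
        exact ⟨fun h => ⟨h.2.1, h.1, h.2.2.symm⟩, fun h => ⟨h.2.1, h.1, h.2.2.symm⟩⟩
      · intro p _
        simp only [π2, Equiv.coe_fn_mk]; ring
  · intro x x' y z
    refine ⟨?_, ?_, ?_⟩ <;>
      simp [hS, add_mul, mul_add, Finset.sum_add_distrib]
end

section
/- Let α_O : (Z₂)ⁿ → Z₂ be defined by α_O(x) = 0 iff the Hamming weight of x is divisible by 4, and let β(x,y) = α_O(x+y) + α_O(x) + α_O(y). Let z = (1,...,1). Then β(y,z) = 0 for all y ∈ (Z₂)ⁿ if and only if n ≡ 0 (mod 4). -/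
/-- Hamming weight of x ∈ (Z₂)ⁿ. -/
def wt {n : ℕ} (x : Fin n → ZMod 2) : ℕ :=
  (Finset.univ.filter (fun i => x i = 1)).card

lemma zmod2_cases : ∀ a : ZMod 2, a = 0 ∨ a = 1 := by decide

lemma wt_le {n : ℕ} (x : Fin n → ZMod 2) : wt x ≤ n := by
  have := Finset.card_filter_le (Finset.univ : Finset (Fin n)) (fun i => x i = 1)
  simpa [wt] using this

lemma wt_ones {n : ℕ} : wt (fun _ : Fin n => (1 : ZMod 2)) = n := by
  simp [wt]

lemma wt_add_ones {n : ℕ} (y : Fin n → ZMod 2) :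
    wt (y + fun _ => 1) = n - wt y := by
  classical
  have h : (Finset.univ.filter (fun i => y i + 1 = (1 : ZMod 2)))
      = (Finset.univ.filter (fun i => y i = 1))ᶜ := by
    ext i
    simp only [Finset.mem_filter, Finset.mem_compl, Finset.mem_univ, true_and]
    rcases zmod2_cases (y i) with h | h <;> simp [h]
  have : wt (y + fun _ => 1) = ((Finset.univ.filter (fun i => y i = 1))ᶜ).card := by
    simp only [wt, Pi.add_apply]
    rw [← h]
  rw [this, Finset.card_compl]
  simp [wt]

lemma wt_indicator {n : ℕ} (s : Finset (Fin n)) :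
    wt (fun i => if i ∈ s then (1 : ZMod 2) else 0) = s.card := by
  classical
  have h : (Finset.univ.filter (fun i => (if i ∈ s then (1 : ZMod 2) else 0) = 1)) = s := by
    ext i
    by_cases hi : i ∈ s <;> simp [hi]
  simp [wt, h]

/-- For the generating function α_O of Oₙ (n ≥ 3), the element u_z with
    z = (1,…,1) is central (β(y,z) = 0 for all y) iff n ≡ 0 (mod 4). -/
theorem stmt_10 (n : ℕ) (hn : 3 ≤ n) (α : (Fin n → ZMod 2) → ZMod 2)
    (hα : ∀ x, α x = 0 ↔ wt x % 4 = 0)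
    (z : Fin n → ZMod 2) (hz : z = fun _ => 1) :
    (∀ y : Fin n → ZMod 2, α (y + z) + α y + α z = 0) ↔ n % 4 = 0 := by
  subst hz
  have hα1 : ∀ x, wt x % 4 ≠ 0 → α x = 1 := by
    intro x hx
    rcases zmod2_cases (α x) with h | h
    · exact absurd ((hα x).1 h) hx
    · exact h
  constructor
  · intro H
    by_contra h4
    have hz1 : α (fun _ : Fin n => (1 : ZMod 2)) = 1 := by
      apply hα1; rw [wt_ones]; exact h4
    rcases (by omega : n % 4 = 1 ∨ n % 4 = 2 ∨ n % 4 = 3) with h | h | h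
    · -- n % 4 = 1, use y of weight 2
      set s : Finset (Fin n) := {⟨0, by omega⟩, ⟨1, by omega⟩} with hs
      set y : Fin n → ZMod 2 := fun i => if i ∈ s then 1 else 0 with hy
      have hcard : s.card = 2 := by
        rw [hs, Finset.card_insert_of_notMem (by simp), Finset.card_singleton]
      have hwy : wt y = 2 := by rw [hy, wt_indicator, hcard]
      have h1 : α y = 1 := hα1 y (by rw [hwy]; decide)
      have h2 : α (y + fun _ => 1) = 1 := by
        apply hα1; rw [wt_add_ones, hwy]; omega
      have := H y
      rw [h1, h2, hz1] at this
      exact absurd this (by decide)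
    · -- n % 4 = 2, use y of weight 1
      set s : Finset (Fin n) := {⟨0, by omega⟩} with hs
      set y : Fin n → ZMod 2 := fun i => if i ∈ s then 1 else 0 with hy
      have hwy : wt y = 1 := by rw [hy, wt_indicator, hs, Finset.card_singleton]
      have h1 : α y = 1 := hα1 y (by rw [hwy]; decide)
      have h2 : α (y + fun _ => 1) = 1 := by
        apply hα1; rw [wt_add_ones, hwy]; omega
      have := H y
      rw [h1, h2, hz1] at this
      exact absurd this (by decide)
    · -- n % 4 = 3, use y of weight 1
      set s : Finset (Fin n) := {⟨0, by omega⟩} with hs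
      set y : Fin n → ZMod 2 := fun i => if i ∈ s then 1 else 0 with hy
      have hwy : wt y = 1 := by rw [hy, wt_indicator, hs, Finset.card_singleton]
      have h1 : α y = 1 := hα1 y (by rw [hwy]; decide)
      have h2 : α (y + fun _ => 1) = 1 := by
        apply hα1; rw [wt_add_ones, hwy]; omega
      have := H y
      rw [h1, h2, hz1] at this
      exact absurd this (by decide)
  · intro h4 y
    have hz0 : α (fun _ : Fin n => (1 : ZMod 2)) = 0 := by
      rw [hα, wt_ones]; exact h4
    have hle := wt_le y
    by_cases hw : wt y % 4 = 0
    · have h1 : α y = 0 := (hα y).2 hw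
      have h2 : α (y + fun _ => 1) = 0 := by
        rw [hα, wt_add_ones]; omega
      rw [h1, h2, hz0]; decide
    · have h1 : α y = 1 := hα1 y hw
      have h2 : α (y + fun _ => 1) = 1 := by
        apply hα1; rw [wt_add_ones]; omega
      rw [h1, h2, hz0]; decide
end

section
/- Let A be a twisted group algebra (K[(Z₂)ⁿ], f) over a field K of characteristic ≠ 2. If for every nonzero x ∈ (Z₂)ⁿ there exists y ∈ (Z₂)ⁿ such that f(x,y) + f(y,x) = 1 (i.e. the basis elements u_x and u_y anticommute), then A is a simple algebra (has no nonzero proper two-sided ideal). -/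
/-- The product of the twisted group algebra (K[(Z₂)ⁿ], f):
    u_x · u_y = (-1)^{f(x,y)} u_{x+y}, extended bilinearly. -/
def tmul {n : ℕ} {K : Type*} [CommRing K]
    (f : (Fin n → ZMod 2) → (Fin n → ZMod 2) → ZMod 2)
    (a b : (Fin n → ZMod 2) → K) : (Fin n → ZMod 2) → K :=
  fun w => ∑ x : Fin n → ZMod 2, ((-1 : K) ^ (f x (w + x)).val) * a x * b (w + x)

section Aux

variable {n : ℕ} {K : Type*} [Field K]

private lemma negone_ne_zero : (-1 : K) ≠ 0 := by norm_num

private lemma zmod2_add_self : ∀ a : ZMod 2, a + a = 0 := by decide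

private lemma gadd_self (u : Fin n → ZMod 2) : u + u = 0 := by
  funext i; exact zmod2_add_self (u i)

private lemma gadd_cancel (u v : Fin n → ZMod 2) : u + (u + v) = v := by
  rw [← add_assoc, gadd_self, zero_add]

private lemma gadd_cancel' (u v : Fin n → ZMod 2) : (u + v) + v = u := by
  rw [add_assoc, gadd_self, add_zero]

/-- basis vector -/
private def eb (t : Fin n → ZMod 2) : (Fin n → ZMod 2) → K :=
  fun w => if w = t then 1 else 0

private lemma tmul_eb_right (f : (Fin n → ZMod 2) → (Fin n → ZMod 2) → ZMod 2)
    (a : (Fin n → ZMod 2) → K) (t w : Fin n → ZMod 2) :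
    tmul f a (eb t) w = (-1 : K) ^ (f (w + t) t).val * a (w + t) := by
  unfold tmul eb
  rw [Finset.sum_eq_single (w + t)]
  · rw [gadd_cancel, if_pos rfl, mul_one]
  · intro x _ hx
    rw [if_neg, mul_zero]
    intro h
    exact hx (by rw [← h, gadd_cancel])
  · intro h; exact absurd (Finset.mem_univ _) h

private lemma tmul_eb_left (f : (Fin n → ZMod 2) → (Fin n → ZMod 2) → ZMod 2)
    (b : (Fin n → ZMod 2) → K) (s w : Fin n → ZMod 2) :
    tmul f (eb s) b w = (-1 : K) ^ (f s (w + s)).val * b (w + s) := by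
  unfold tmul eb
  rw [Finset.sum_eq_single s]
  · rw [if_pos rfl, mul_one]
  · intro x _ hx
    rw [if_neg hx, mul_zero, zero_mul]
  · intro h; exact absurd (Finset.mem_univ _) h

/-- support as a finset -/
private noncomputable def suppF (a : (Fin n → ZMod 2) → K) : Finset (Fin n → ZMod 2) :=
  @Finset.filter _ (fun w => a w ≠ 0) (Classical.decPred _) Finset.univ

private lemma mem_suppF {a : (Fin n → ZMod 2) → K} {w : Fin n → ZMod 2} :
    w ∈ suppF a ↔ a w ≠ 0 := by
  unfold suppF
  classical
  simp [Finset.mem_filter]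

private lemma suppF_card_shift (a : (Fin n → ZMod 2) → K) (t : Fin n → ZMod 2)
    (u : (Fin n → ZMod 2) → K) (hu : ∀ w, u w ≠ 0) :
    (suppF (fun w => u w * a (w + t))).card = (suppF a).card := by
  have himg : suppF (fun w => u w * a (w + t)) = (suppF a).image (· + t) := by
    ext w
    rw [mem_suppF, Finset.mem_image]
    constructor
    · intro h
      exact ⟨w + t, mem_suppF.mpr (right_ne_zero_of_mul h), gadd_cancel' w t⟩
    · rintro ⟨v, hv, rfl⟩
      rw [gadd_cancel']
      exact mul_ne_zero (hu _) (mem_suppF.mp hv)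
  rw [himg, Finset.card_image_of_injective _ (add_left_injective t)]

private lemma neg_one_pow_val_inj (hK : (-1 : K) ≠ 1) {i j : ZMod 2}
    (h : (-1 : K) ^ i.val = (-1 : K) ^ j.val) : i = j := by
  have hcases : ∀ a : ZMod 2, a = 0 ∨ a = 1 := by decide
  rcases hcases i with hi | hi <;> rcases hcases j with hj | hj <;> subst hi <;> subst hj
  · rfl
  · simp only [ZMod.val_zero, ZMod.val_one, pow_zero, pow_one] at h
    exact absurd h.symm hK
  · simp only [ZMod.val_zero, ZMod.val_one, pow_zero, pow_one] at h
    exact absurd h hK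
  · rfl

end Aux

/-- If every nonzero x admits y with f(x,y) + f(y,x) = 1 (i.e. u_x and u_y
    anticommute), then the twisted group algebra (K[(Z₂)ⁿ], f) is simple. -/
theorem stmt_14 (n : ℕ) (K : Type*) [Field K] (hchar : ringChar K ≠ 2)
    (f : (Fin n → ZMod 2) → (Fin n → ZMod 2) → ZMod 2)
    (hf0 : ∀ x : Fin n → ZMod 2, f 0 x = 0 ∧ f x 0 = 0)
    (hanti : ∀ x : Fin n → ZMod 2, x ≠ 0 →
      ∃ y : Fin n → ZMod 2, f x y + f y x = 1) :
    ∀ I : Submodule K ((Fin n → ZMod 2) → K),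
      (∀ a ∈ I, ∀ b : (Fin n → ZMod 2) → K, tmul f a b ∈ I ∧ tmul f b a ∈ I) →
      I = ⊥ ∨ I = ⊤ := by
  intro I hI
  by_cases hbot : I = ⊥
  · exact Or.inl hbot
  right
  have hK : (-1 : K) ≠ 1 := Ring.neg_one_ne_one_of_char_ne_two hchar
  obtain ⟨a0, ha0I, ha0⟩ := (Submodule.ne_bot_iff I).mp hbot
  set S : Set ℕ := {k | ∃ c, c ∈ I ∧ c ≠ 0 ∧ (suppF c).card = k} with hSdef
  have hSne : S.Nonempty := ⟨_, a0, ha0I, ha0, rfl⟩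
  obtain ⟨a, haI, ha, hacard⟩ := Nat.sInf_mem hSne
  have hmin : ∀ c, c ∈ I → c ≠ 0 → sInf S ≤ (suppF c).card := by
    intro c hc hc0
    exact Nat.sInf_le ⟨c, hc, hc0, rfl⟩
  obtain ⟨p, hp⟩ := Function.ne_iff.mp ha
  simp only [Pi.zero_apply] at hp
  -- translate a so that its support contains 0
  set a1 : (Fin n → ZMod 2) → K := tmul f a (eb p) with ha1def
  have ha1I : a1 ∈ I := (hI a haI (eb p)).1
  have ha1 : ∀ w, a1 w = (-1 : K) ^ (f (w + p) p).val * a (w + p) := fun w =>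
    tmul_eb_right f a p w
  have ha10 : a1 0 ≠ 0 := by
    rw [ha1 0, zero_add]
    exact mul_ne_zero (pow_ne_zero _ (negone_ne_zero)) hp
  have ha1ne : a1 ≠ 0 := fun h => ha10 (by rw [h]; rfl)
  have ha1card : (suppF a1).card = sInf S := by
    have hfa : a1 = fun w => ((-1 : K) ^ (f (w + p) p).val) * a (w + p) := funext ha1
    rw [hfa, suppF_card_shift a p _ (fun w => pow_ne_zero _ negone_ne_zero), hacard]
  -- key claim: a1 is supported at 0 only
  have hzero : ∀ x, x ≠ 0 → a1 x = 0 := by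
    intro x hx
    by_contra hax
    obtain ⟨y, hy⟩ := hanti x hx
    have e_xyy : (x + y) + y = x := gadd_cancel' x y
    -- the main minimality lemma: any two signed y-translates of a1 lying in I
    -- have proportional sign functions on the support.
    have main : ∀ (ε ε' b b' : (Fin n → ZMod 2) → K),
        b ∈ I → b' ∈ I → (∀ w, ε w ≠ 0) → (∀ w, ε' w ≠ 0) →
        (∀ w, b w = ε w * a1 (w + y)) → (∀ w, b' w = ε' w * a1 (w + y)) →
        ε y * ε' (x + y) = ε' y * ε (x + y) := by
      intro ε ε' b b' hbI hb'I hε hε' hb hb'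
      set c : (Fin n → ZMod 2) → K := b y • b' - b' y • b with hcdef
      have hcI : c ∈ I :=
        Submodule.sub_mem _ (Submodule.smul_mem _ _ hb'I) (Submodule.smul_mem _ _ hbI)
      have hcw : ∀ w, c w = (b y * ε' w - b' y * ε w) * a1 (w + y) := by
        intro w
        simp only [hcdef, Pi.sub_apply, Pi.smul_apply, smul_eq_mul, hb w, hb' w]
        ring
      have hcy : c y = 0 := by
        simp only [hcdef, Pi.sub_apply, Pi.smul_apply, smul_eq_mul]
        ring
      have hby : b y ≠ 0 := by
        rw [hb y, gadd_self]
        exact mul_ne_zero (hε y) ha10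
      have hbcard : (suppF b).card = sInf S := by
        have hfb : b = fun w => ε w * a1 (w + y) := funext hb
        rw [hfb, suppF_card_shift a1 y ε hε, ha1card]
      have hc0 : c = 0 := by
        by_contra hc
        have h1 := hmin c hcI hc
        have hsub : suppF c ⊆ (suppF b).erase y := by
          intro w hw
          rw [mem_suppF] at hw
          rw [Finset.mem_erase, mem_suppF]
          refine ⟨fun h => hw (h ▸ hcy), fun h => hw ?_⟩
          have ha1w : a1 (w + y) = 0 := by
            have h' : ε w * a1 (w + y) = 0 := (hb w) ▸ h
            rcases mul_eq_zero.mp h' with h'' | h''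
            · exact absurd h'' (hε w)
            · exact h''
          rw [hcw w, ha1w, mul_zero]
        have h2 := Finset.card_le_card hsub
        have h3 := Finset.card_erase_lt_of_mem (mem_suppF.mpr hby)
        omega
      have hcv := congrFun hc0 (x + y)
      rw [hcw (x + y), e_xyy] at hcv
      simp only [Pi.zero_apply] at hcv
      have h5 : b y * ε' (x + y) - b' y * ε (x + y) = 0 := by
        rcases mul_eq_zero.mp hcv with h | h
        · exact h
        · exact absurd h hax
      have hby' : b y = ε y * a1 0 := by rw [hb y, gadd_self]
      have hb'y' : b' y = ε' y * a1 0 := by rw [hb' y, gadd_self]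
      rw [hby', hb'y'] at h5
      have h6 := sub_eq_zero.mp h5
      apply mul_left_cancel₀ ha10
      calc a1 0 * (ε y * ε' (x + y)) = ε y * a1 0 * ε' (x + y) := by ring
        _ = ε' y * a1 0 * ε (x + y) := h6
        _ = a1 0 * (ε' y * ε (x + y)) := by ring
    -- the three elements of I
    have key : ∀ w : Fin n → ZMod 2, (w + (x + y)) + x = w + y := by
      intro w
      rw [add_assoc, add_comm (x + y) x, ← add_assoc x x y, gadd_self, zero_add]
    set ε1 : (Fin n → ZMod 2) → K :=
      fun w => (-1 : K) ^ (f (w + (x + y)) (x + y)).val * (-1 : K) ^ (f (w + y) x).val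
      with hε1def
    set ε2 : (Fin n → ZMod 2) → K := fun w => (-1 : K) ^ (f (w + y) y).val with hε2def
    set ε3 : (Fin n → ZMod 2) → K := fun w => (-1 : K) ^ (f y (w + y)).val with hε3def
    have hε1 : ∀ w, ε1 w ≠ 0 := fun w =>
      mul_ne_zero (pow_ne_zero _ negone_ne_zero) (pow_ne_zero _ negone_ne_zero)
    have hε2 : ∀ w, ε2 w ≠ 0 := fun w => pow_ne_zero _ negone_ne_zero
    have hε3 : ∀ w, ε3 w ≠ 0 := fun w => pow_ne_zero _ negone_ne_zero
    set b1 : (Fin n → ZMod 2) → K := tmul f (tmul f a1 (eb x)) (eb (x + y)) with hb1def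
    have hb1I : b1 ∈ I := (hI _ (hI a1 ha1I (eb x)).1 _).1
    have hb1 : ∀ w, b1 w = ε1 w * a1 (w + y) := by
      intro w
      rw [hb1def, tmul_eb_right, tmul_eb_right, key, hε1def, mul_assoc]
    set b2 : (Fin n → ZMod 2) → K := tmul f a1 (eb y) with hb2def
    have hb2I : b2 ∈ I := (hI a1 ha1I _).1
    have hb2 : ∀ w, b2 w = ε2 w * a1 (w + y) := fun w => tmul_eb_right f a1 y w
    set b3 : (Fin n → ZMod 2) → K := tmul f (eb y) a1 with hb3def
    have hb3I : b3 ∈ I := (hI a1 ha1I _).2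
    have hb3 : ∀ w, b3 w = ε3 w * a1 (w + y) := fun w => tmul_eb_left f a1 y w
    have M2 := main ε1 ε2 b1 b2 hb1I hb2I hε1 hε2 hb1 hb2
    have M3 := main ε1 ε3 b1 b3 hb1I hb3I hε1 hε3 hb1 hb3
    -- ε2 y = ε3 y = 1
    have hε2y : ε2 y = 1 := by
      rw [hε2def]
      simp only [gadd_self, (hf0 y).1, ZMod.val_zero, pow_zero]
    have hε3y : ε3 y = 1 := by
      rw [hε3def]
      simp only [gadd_self, (hf0 y).2, ZMod.val_zero, pow_zero]
    rw [hε2y, one_mul] at M2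
    rw [hε3y, one_mul] at M3
    have hM : ε1 y * ε2 (x + y) = ε1 y * ε3 (x + y) := by rw [M2, M3]
    have hM2 := mul_left_cancel₀ (hε1 y) hM
    rw [hε2def, hε3def] at hM2
    simp only [e_xyy] at hM2
    have hfeq : f x y = f y x := neg_one_pow_val_inj hK hM2
    rw [hfeq, zmod2_add_self] at hy
    exact absurd hy (by decide)
  -- a1 is a nonzero multiple of the identity; conclude I = ⊤
  have hdiag : ∀ b : (Fin n → ZMod 2) → K, tmul f a1 b = fun w => a1 0 * b w := by
    intro b
    funext w
    unfold tmul
    rw [Finset.sum_eq_single 0]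
    · rw [(hf0 (w + 0)).1, ZMod.val_zero, pow_zero, one_mul, add_zero]
    · intro x _ hx
      rw [hzero x hx, mul_zero, zero_mul]
    · intro h; exact absurd (Finset.mem_univ _) h
  rw [Submodule.eq_top_iff']
  intro b
  have hmem : tmul f a1 b ∈ I := (hI a1 ha1I b).1
  rw [hdiag b] at hmem
  have hb : b = (a1 0)⁻¹ • (fun w => a1 0 * b w) := by
    funext w
    simp only [Pi.smul_apply, smul_eq_mul]
    rw [← mul_assoc, inv_mul_cancel₀ ha10, one_mul]
  rw [hb]
  exact Submodule.smul_mem _ _ hmem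
end
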